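/- Let m̂ ∈ P₂(ℝ^d), R > 0, φ ∈ UC_m̂, κ ∈ (0,1], ε ∈ (0,1], m ∈ B_R(m̂), and suppose there exists an Ekeland point μ̄ for (φ,κ,ε,m). Then φ(m) − φ_κ(m) ≤ ω_R^ε(M_κ^ε(R)) + N_κ^ε(R,m). -/

import Mathlib

open MeasureTheory Set Filter Topology
open scoped ENNReal NNReal InnerProductSpace

noncomputable section

/-- `ℝ^d` with the Euclidean structure. -/
abbrev Ed (d : ℕ) : Type := EuclideanSpace ℝ (Fin d)

/-- A Borel probability measure with finite second moment. -/
def IsP2Meas {E : Type*} [NormedAddCommGroup E] [MeasurableSpace E] (μ : Measure E) : Prop :=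
  IsProbabilityMeasure μ ∧ ∫⁻ x, (‖x‖₊ : ℝ≥0∞) ^ 2 ∂μ < ⊤

/-- The Wasserstein space `P₂(ℝ^d)` of Borel probability measures with finite second moment. -/
def P2 (d : ℕ) : Type := {μ : Measure (Ed d) // IsP2Meas μ}

/-- `ς₂(μ)`, the square root of the second moment of `μ`. -/
def varsigma2 {d : ℕ} (μ : P2 d) : ℝ :=
  Real.sqrt (∫⁻ x, (‖x‖₊ : ℝ≥0∞) ^ 2 ∂μ.1).toReal

/-- `π` is a plan (coupling) between `μ` and `ν`. -/
def IsCoupling {d : ℕ} (π : Measure (Ed d × Ed d)) (μ ν : P2 d) : Prop :=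
  π.map Prod.fst = μ.1 ∧ π.map Prod.snd = ν.1

/-- The quadratic transport cost of a plan. -/
def Wcost {d : ℕ} (π : Measure (Ed d × Ed d)) : ℝ≥0∞ :=
  ∫⁻ p, (‖p.1 - p.2‖₊ : ℝ≥0∞) ^ 2 ∂π

/-- The 2-Wasserstein distance. -/
def W2 {d : ℕ} (μ ν : P2 d) : ℝ :=
  Real.sqrt (⨅ π ∈ {π : Measure (Ed d × Ed d) | IsCoupling π μ ν}, Wcost π).toReal

/-- `π ∈ Π_o(μ,ν)` : an optimal plan between `μ` and `ν`. -/
def IsOptPlan {d : ℕ} (π : Measure (Ed d × Ed d)) (μ ν : P2 d) : Prop :=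
  IsCoupling π μ ν ∧ ∀ π' : Measure (Ed d × Ed d), IsCoupling π' μ ν → Wcost π ≤ Wcost π'

/-- The closed Wasserstein ball `B_R(m̂)`. -/
def ballW {d : ℕ} (mhat : P2 d) (R : ℝ) : Set (P2 d) := {μ | W2 mhat μ ≤ R}

/-- The open Wasserstein ball `O_R(m̂)`. -/
def oballW {d : ℕ} (mhat : P2 d) (R : ℝ) : Set (P2 d) := {μ | W2 mhat μ < R}

/-- The Dirac measure at the origin as an element of `P₂(ℝ^d)`. -/
def dirac0 (d : ℕ) : P2 d :=
  ⟨Measure.dirac 0, ⟨by infer_instance, by rw [lintegral_dirac]; simp⟩⟩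

/-- The class `UC_m̂` : nonnegative, uniformly continuous on every bounded set,
positive-definite at `m̂`. -/
structure UCmem {d : ℕ} (mhat : P2 d) (φ : P2 d → ℝ) : Prop where
  nonneg : ∀ μ : P2 d, 0 ≤ φ μ
  unif_cont : ∀ R > (0 : ℝ), ∀ η > (0 : ℝ), ∃ δ > (0 : ℝ), ∀ μ ν : P2 d,
    W2 mhat μ ≤ R → W2 mhat ν ≤ R → W2 μ ν ≤ δ → |φ μ - φ ν| ≤ η
  zero_at : φ mhat = 0
  pos_off : ∀ μ : P2 d, μ ≠ mhat → 0 < φ μ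

/-- The inf-convolution `φ_κ`. -/
def infConv {d : ℕ} (φ : P2 d → ℝ) (κ : ℝ) (m : P2 d) : ℝ :=
  ⨅ μ : P2 d, (φ μ + 1 / (2 * κ ^ 2) * W2 m μ ^ 2)

/-- `S(R) = sup_{μ ∈ B_R(m̂)} φ(μ)`. -/
def Sfun {d : ℕ} (mhat : P2 d) (φ : P2 d → ℝ) (R : ℝ) : ℝ := sSup (φ '' ballW mhat R)

/-- `I(R) = inf_{μ ∉ O_R(m̂)} φ(μ)`. -/
def Ifun {d : ℕ} (mhat : P2 d) (φ : P2 d → ℝ) (R : ℝ) : ℝ := sInf (φ '' (oballW mhat R)ᶜ)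

/-- `G_R = {μ : φ(μ) ≤ I(R)/2}`. -/
def Gset {d : ℕ} (mhat : P2 d) (φ : P2 d → ℝ) (R : ℝ) : Set (P2 d) :=
  {μ | φ μ ≤ Ifun mhat φ R / 2}

/-- `G_R^κ = {μ : φ_κ(μ) ≤ I(R)/2}`. -/
def GsetK {d : ℕ} (mhat : P2 d) (φ : P2 d → ℝ) (κ R : ℝ) : Set (P2 d) :=
  {μ | infConv φ κ μ ≤ Ifun mhat φ R / 2}

/-- `𝓡(R) = sup{r ≥ 0 : B_r(m̂) ⊆ G_R}`. -/
def Rfun {d : ℕ} (mhat : P2 d) (φ : P2 d → ℝ) (R : ℝ) : ℝ :=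
  sSup {r : ℝ | 0 ≤ r ∧ ballW mhat r ⊆ Gset mhat φ R}

/-- `M_κ^ε(R) = κ√(2S(R)+ε²κ²) − εκ²`. -/
def Mke {d : ℕ} (mhat : P2 d) (φ : P2 d → ℝ) (κ ε R : ℝ) : ℝ :=
  κ * Real.sqrt (2 * Sfun mhat φ R + ε ^ 2 * κ ^ 2) - ε * κ ^ 2

/-- `M^ε(R) = R + √(2S(R)+ε²)`. -/
def Me {d : ℕ} (mhat : P2 d) (φ : P2 d → ℝ) (ε R : ℝ) : ℝ :=
  R + Real.sqrt (2 * Sfun mhat φ R + ε ^ 2)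

/-- `ω_R^ε(δ)`, the modulus of continuity of `φ` on `B_{M^ε(R)}(m̂)`. -/
def omegaR {d : ℕ} (mhat : P2 d) (φ : P2 d → ℝ) (ε R δ : ℝ) : ℝ :=
  sSup {c : ℝ | ∃ ν₁ ν₂ : P2 d, W2 ν₁ ν₂ ≤ δ ∧ W2 mhat ν₁ ≤ Me mhat φ ε R ∧
    W2 mhat ν₂ ≤ Me mhat φ ε R ∧ c = |φ ν₁ - φ ν₂|}

/-- `K_κ^ε(R) = εκ² + κ√(ε²κ² + 2ω_R^ε(M_κ^ε(R)))`. -/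
def Kke {d : ℕ} (mhat : P2 d) (φ : P2 d → ℝ) (κ ε R : ℝ) : ℝ :=
  ε * κ ^ 2 + κ * Real.sqrt (ε ^ 2 * κ ^ 2 + 2 * omegaR mhat φ ε R (Mke mhat φ κ ε R))

/-- `N_κ^ε(R,m) = εκ√(2φ_κ(m)) + ε·M_κ^ε(R)`. -/
def Nke {d : ℕ} (mhat : P2 d) (φ : P2 d → ℝ) (κ ε R : ℝ) (m : P2 d) : ℝ :=
  ε * κ * Real.sqrt (2 * infConv φ κ m) + ε * Mke mhat φ κ ε R

/-- `μ̄` is an Ekeland point for `(φ,κ,ε,m)`. -/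
def EkelandPt {d : ℕ} (φ : P2 d → ℝ) (κ ε : ℝ) (m μb : P2 d) : Prop :=
  (φ μb + 1 / (2 * κ ^ 2) * W2 m μb ^ 2 ≤ φ m - ε * W2 μb m) ∧
  ∀ μ : P2 d, φ μb + 1 / (2 * κ ^ 2) * W2 m μb ^ 2 ≤
    φ μ + 1 / (2 * κ ^ 2) * W2 m μ ^ 2 + ε * W2 μb μ

/-- The proximal subgradient inequality at `m` with target `μ`, slope measure `α`
and parameter `σ`. -/
def ProxIneq {d : ℕ} (φ : P2 d → ℝ) (ε σ : ℝ) (m : P2 d)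
    (α : Measure (Ed d × Ed d)) (μ : P2 d) : Prop :=
  ∀ β : Measure (Ed d × Ed d × Ed d), IsP2Meas β →
    IsCoupling (β.map fun z => (z.1, z.2.1)) m μ →
    β.map (fun z => (z.1, z.2.2)) = α →
    φ m + ∫ z, ⟪z.2.2, z.2.1 - z.1⟫_ℝ ∂β - σ * ∫ z, ‖z.2.1 - z.1‖ ^ 2 ∂β
      - ε * W2 m μ ≤ φ μ

/-- `α ∈ ∂_P^ε φ(m)` : proximal `ε`-subgradient. -/
def ProxSubgrad {d : ℕ} (φ : P2 d → ℝ) (ε : ℝ) (m : P2 d)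
    (α : Measure (Ed d × Ed d)) : Prop :=
  IsP2Meas α ∧ ∃ σ > (0 : ℝ), ∃ r > (0 : ℝ), ∀ μ : P2 d, W2 m μ ≤ r → ProxIneq φ ε σ m α μ

/-- `(φ,ψ)` is a control-Lyapunov pair at `m̂` for the dynamics `f`, with threshold `ε₀`. -/
structure IsCLP {d : ℕ} {U : Type*} (f : Ed d → P2 d → U → Ed d) (mhat : P2 d)
    (φ : P2 d → ℝ) (ψ : P2 d → ℝ → ℝ) (ε₀ : ℝ) : Prop where
  phi_uc : UCmem mhat φ
  psi_pos : ∀ (m : P2 d) (ε : ℝ), 0 < ε → 0 < ψ m ε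
  psi_cont : ∀ (m : P2 d) (ε : ℝ), 0 < ε → ∀ η > (0 : ℝ), ∃ δ > (0 : ℝ),
    ∀ (m' : P2 d) (ε' : ℝ), 0 < ε' → W2 m m' < δ → |ε - ε'| < δ → |ψ m ε - ψ m' ε'| < η
  level_bdd : ∀ c : ℝ, ∃ K : ℝ, ∀ μ : P2 d, φ μ ≤ c → W2 mhat μ ≤ K
  psi_inf_pos : ∀ r R : ℝ, 0 < r → r < R → ∀ ε > (0 : ℝ), ∃ g > (0 : ℝ),
    ∀ m : P2 d, W2 mhat m ≤ R → ¬ W2 mhat m < r → g ≤ ψ m ε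
  psi_mono : ∀ (m : P2 d) (ε ε' : ℝ), 0 < ε → ε ≤ ε' → ψ m ε ≤ ψ m ε'
  eps0_pos : 0 < ε₀
  decrease : ∀ ε : ℝ, 0 < ε → ε < ε₀ → ∀ (m : P2 d) (α : Measure (Ed d × Ed d)),
    ProxSubgrad φ ε m α → ∃ u : U, ∫ z, ⟪z.2, f z.1 m u⟫_ℝ ∂α ≤ -ψ m ε

/-- A partition of `[0,∞)`. -/
def IsPartition (θ : ℕ → ℝ) : Prop :=
  θ 0 = 0 ∧ StrictMono θ ∧ Tendsto θ atTop atTop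

/-- The steps of the partition `θ` lie in `[δ₁, δ₂]` (i.e. `θ ∈ Θ(δ₁,δ₂)`). -/
def StepIn (θ : ℕ → ℝ) (δ₁ δ₂ : ℝ) : Prop :=
  ∀ i : ℕ, δ₁ ≤ θ (i + 1) - θ i ∧ θ (i + 1) - θ i ≤ δ₂

/-- `W₂`-continuity of a measure-valued curve on `[a,b]`. -/
def W2ContinuousOn {d : ℕ} (m : ℝ → P2 d) (a b : ℝ) : Prop :=
  ∀ t ∈ Icc a b, ∀ η > (0 : ℝ), ∃ δ > (0 : ℝ), ∀ s ∈ Icc a b, |s - t| < δ →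
    W2 (m s) (m t) < η

/-- `m` is a `W₂`-continuous distributional solution of the non-local continuity equation
`∂_t m_t + div(f(x,m_t,u) m_t) = 0` on `[a,b]` with constant control `u`. -/
def SolvesCE {d : ℕ} {U : Type*} (f : Ed d → P2 d → U → Ed d) (u : U)
    (m : ℝ → P2 d) (a b : ℝ) : Prop :=
  W2ContinuousOn m a b ∧
  ∀ χ : Ed d × ℝ → ℝ, ContDiff ℝ (⊤ : ℕ∞) χ → HasCompactSupport χ →
    tsupport χ ⊆ univ ×ˢ Ioo a b →
    ∫ t in a..b, ∫ x, (deriv (fun s : ℝ => χ (x, s)) t +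
      fderiv ℝ (fun y : Ed d => χ (y, t)) x (f x (m t) u)) ∂(m t).1 = 0

/-- A `θ`-trajectory of the controlled continuity equation under the feedback `k`,
starting from `m_*`. -/
def IsTraj {d : ℕ} {U : Type*} (f : Ed d → P2 d → U → Ed d) (k : P2 d → U)
    (θ : ℕ → ℝ) (mstar : P2 d) (m : ℝ → P2 d) : Prop :=
  m 0 = mstar ∧ ∀ i : ℕ, SolvesCE f (k (m (θ i))) m (θ i) (θ (i + 1))

/-- The extremal-shift value `∫ ((x−y)/κ²)·f(x,m,u) dπ(x,y)`. -/
def shiftVal {d : ℕ} {U : Type*} (f : Ed d → P2 d → U → Ed d) (κ : ℝ)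
    (π : Measure (Ed d × Ed d)) (m : P2 d) (u : U) : ℝ :=
  ∫ p, ⟪(κ ^ 2)⁻¹ • (p.1 - p.2), f p.1 m u⟫_ℝ ∂π

/-- `k` is an extremal-shift feedback associated with the plan selection `πsel`. -/
def IsExtremalShift {d : ℕ} {U : Type*} (f : Ed d → P2 d → U → Ed d) (κ : ℝ)
    (πsel : P2 d → Measure (Ed d × Ed d)) (k : P2 d → U) : Prop :=
  ∀ (m : P2 d) (u : U), shiftVal f κ (πsel m) m (k m) ≤ shiftVal f κ (πsel m) m u

/-- `C₂(R)` (computed with time-step bound `δ` and `s = ς₂(m̂)`). -/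
def C2const (C₁ δ s R : ℝ) : ℝ :=
  C₁ * Real.exp (C₁ * δ) * (1 + 2 * (C₁ * δ + s + R) * Real.exp (2 * C₁ * δ))

/-- `C₃(R)` (computed with time-step bound `δ` and `s = ς₂(m̂)`). -/
def C3const (C₀ C₁ δ s R : ℝ) : ℝ :=
  C₀ * (C₁ * Real.exp (C₁ * δ) * (1 + 2 * (C₁ * δ + s + R) * Real.exp (2 * C₁ * δ))
    + C2const C₁ δ s R)

/-- A feedback `k` is s-stabilizing at `m̂`. -/
def SStabilizing {d : ℕ} {U : Type*} (f : Ed d → P2 d → U → Ed d) (mhat : P2 d)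
    (k : P2 d → U) : Prop :=
  ∃ M : ℝ → ℝ, (∀ R > (0 : ℝ), 0 < M R) ∧
    Tendsto M (nhdsWithin 0 (Ioi 0)) (nhds 0) ∧
    ∀ r R : ℝ, 0 < r → r < R → ∃ δ > (0 : ℝ), ∃ T > (0 : ℝ),
      ∀ δhat : ℝ, 0 < δhat → δhat < δ →
      ∀ θ : ℕ → ℝ, IsPartition θ → StepIn θ δhat δ →
      ∀ mstar : P2 d, W2 mhat mstar ≤ R →
      ∀ m : ℝ → P2 d, IsTraj f k θ mstar m →
        (∀ t : ℝ, T ≤ t → W2 mhat (m t) ≤ r) ∧ (∀ t : ℝ, 0 ≤ t → W2 mhat (m t) ≤ M R)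

/-!
Let `w = W₂(m, μ̄)`. Condition (i) and `φ ≥ 0` give `w² / (2κ²) + ε w ≤ φ(m) ≤ S(R)`, so `w` is at most
the positive root `M_κ^ε(R)` of this quadratic; hence `m` and `μ̄` both lie in `B_{M^ε(R)}(m̂)` and
`φ(m) - φ(μ̄) ≤ ω_R^ε(M_κ^ε(R))`. Condition (ii) tested at any `μ`, with the triangle inequality and
`W₂(m, μ) ≤ κ √(2 (φ(μ) + W₂²(m, μ) / (2κ²)))`, gives
`φ(μ̄) ≤ φ_κ(m) + ε κ √(2 φ_κ(m)) + ε w`. The suprema `S(R)` and `ω_R^ε` are finite because a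
function uniformly continuous on bounded sets of the length space `P₂` is bounded on bounded sets.
-/

open ProbabilityTheory

section Wasserstein

variable {d : ℕ}

lemma lintegral_nnnorm_sq_eq_eLpNorm_sq {α E : Type*} [MeasurableSpace α] [NormedAddCommGroup E]
    (f : α → E) (μ : Measure α) :
    ∫⁻ x, (‖f x‖₊ : ℝ≥0∞) ^ 2 ∂μ = eLpNorm f 2 μ ^ 2 := by
  have h := eLpNorm_nnreal_pow_eq_lintegral (f := f) (μ := μ) (p := 2) two_ne_zero
  simp only [NNReal.coe_ofNat, ENNReal.rpow_ofNat, ENNReal.coe_ofNat] at h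
  rw [h]
  rfl

lemma isP2Meas_iff_memLp {μ : Measure (Ed d)} [IsProbabilityMeasure μ] :
    IsP2Meas μ ↔ MemLp id 2 μ := by
  have h := lintegral_nnnorm_sq_eq_eLpNorm_sq (id : Ed d → Ed d) μ
  simp only [id] at h
  simp only [IsP2Meas, MemLp, h, ENNReal.pow_lt_top_iff, aestronglyMeasurable_id]
  tauto

lemma P2.memLp_id (μ : P2 d) : MemLp id 2 μ.1 :=
  have := μ.2.1
  isP2Meas_iff_memLp.1 μ.2

def l2Cost (π : Measure (Ed d × Ed d)) : ℝ≥0∞ :=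
  eLpNorm (fun p : Ed d × Ed d => p.1 - p.2) 2 π

lemma Wcost_eq_l2Cost_sq (π : Measure (Ed d × Ed d)) : Wcost π = l2Cost π ^ 2 :=
  lintegral_nnnorm_sq_eq_eLpNorm_sq _ π

lemma l2Cost_map {α : Type*} [MeasurableSpace α] {β : Measure α} {g : α → Ed d × Ed d}
    (hg : Measurable g) :
    l2Cost (β.map g) = eLpNorm (fun a => (g a).1 - (g a).2) 2 β :=
  eLpNorm_map_measure (by fun_prop) hg.aemeasurable

lemma l2Cost_map_swap (π : Measure (Ed d × Ed d)) : l2Cost (π.map Prod.swap) = l2Cost π := by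
  rw [l2Cost_map measurable_swap, l2Cost, ← eLpNorm_neg]
  congr 1
  ext p : 1
  simp

namespace IsCoupling

variable {π : Measure (Ed d × Ed d)} {μ ν : P2 d}

lemma isProbabilityMeasure (h : IsCoupling π μ ν) : IsProbabilityMeasure π := by
  have := μ.2.1
  rw [← h.1] at this
  exact Measure.isProbabilityMeasure_map_iff measurable_fst.aemeasurable |>.1 this

lemma swap (h : IsCoupling π μ ν) : IsCoupling (π.map Prod.swap) ν μ :=
  ⟨by rw [Measure.map_map measurable_fst measurable_swap]; exact h.2,
    by rw [Measure.map_map measurable_snd measurable_swap]; exact h.1⟩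

lemma memLp_fst (h : IsCoupling π μ ν) : MemLp Prod.fst 2 π := by
  have := μ.memLp_id
  rw [← h.1] at this
  exact (memLp_map_measure_iff aestronglyMeasurable_id measurable_fst.aemeasurable).1 this

lemma memLp_snd (h : IsCoupling π μ ν) : MemLp Prod.snd 2 π := by
  have := ν.memLp_id
  rw [← h.2] at this
  exact (memLp_map_measure_iff aestronglyMeasurable_id measurable_snd.aemeasurable).1 this

lemma l2Cost_ne_top (h : IsCoupling π μ ν) : l2Cost π ≠ ⊤ :=
  (h.memLp_fst.sub h.memLp_snd).2.ne

lemma iInf_Wcost_le (h : IsCoupling π μ ν) :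
    ⨅ π ∈ {π | IsCoupling π μ ν}, Wcost π ≤ l2Cost π ^ 2 :=
  Wcost_eq_l2Cost_sq π ▸ iInf₂_le π h

end IsCoupling

lemma isCoupling_prod (μ ν : P2 d) : IsCoupling (μ.1.prod ν.1) μ ν := by
  have := μ.2.1
  have := ν.2.1
  exact ⟨Measure.fst_prod, Measure.snd_prod⟩

lemma W2_nonneg (μ ν : P2 d) : 0 ≤ W2 μ ν := Real.sqrt_nonneg _

lemma W2_le_l2Cost {π : Measure (Ed d × Ed d)} {μ ν : P2 d} (h : IsCoupling π μ ν) :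
    W2 μ ν ≤ (l2Cost π).toReal := by
  have hle := h.iInf_Wcost_le
  calc W2 μ ν ≤ Real.sqrt (l2Cost π ^ 2).toReal :=
        Real.sqrt_le_sqrt (ENNReal.toReal_mono (ENNReal.pow_ne_top h.l2Cost_ne_top) hle)
    _ = (l2Cost π).toReal := by rw [ENNReal.toReal_pow, Real.sqrt_sq ENNReal.toReal_nonneg]

lemma exists_coupling_l2Cost_lt (μ ν : P2 d) {η : ℝ} (hη : 0 < η) :
    ∃ π, IsCoupling π μ ν ∧ (l2Cost π).toReal < W2 μ ν + η := by
  set I := ⨅ π ∈ {π | IsCoupling π μ ν}, Wcost π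
  have hI : I ≠ ⊤ := ne_top_of_le_ne_top (ENNReal.pow_ne_top (isCoupling_prod μ ν).l2Cost_ne_top)
    (isCoupling_prod μ ν).iInf_Wcost_le
  have hW2 : W2 μ ν ^ 2 = I.toReal := Real.sq_sqrt ENNReal.toReal_nonneg
  have hpos : 0 < W2 μ ν + η := add_pos_of_nonneg_of_pos (W2_nonneg μ ν) hη
  have hlt : I < ENNReal.ofReal ((W2 μ ν + η) ^ 2) := by
    rw [← ENNReal.ofReal_toReal hI, ENNReal.ofReal_lt_ofReal_iff (by positivity), ← hW2]
    nlinarith [W2_nonneg μ ν]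
  obtain ⟨π, hπ, hcost⟩ : ∃ π, IsCoupling π μ ν ∧ Wcost π < ENNReal.ofReal ((W2 μ ν + η) ^ 2) := by
    simpa only [I, iInf_lt_iff, exists_prop, Set.mem_ofPred_eq] using hlt
  refine ⟨π, hπ, lt_of_pow_lt_pow_left₀ 2 hpos.le ?_⟩
  rwa [Wcost_eq_l2Cost_sq, ← ENNReal.ofReal_toReal (ENNReal.pow_ne_top hπ.l2Cost_ne_top),
    ENNReal.ofReal_lt_ofReal_iff (by positivity), ENNReal.toReal_pow] at hcost

lemma W2_comm (μ ν : P2 d) : W2 μ ν = W2 ν μ := by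
  have key (μ ν : P2 d) : W2 μ ν ≤ W2 ν μ := le_of_forall_pos_lt_add fun η hη => by
    obtain ⟨π, hπ, hlt⟩ := exists_coupling_l2Cost_lt ν μ hη
    exact (W2_le_l2Cost hπ.swap).trans_lt (by rwa [l2Cost_map_swap])
  exact le_antisymm (key μ ν) (key ν μ)

/-- Gluing: disintegrate both couplings along the common marginal `ν` and take the product of the
conditional kernels; Minkowski's inequality in `L²` bounds the cost of the glued coupling. -/
lemma IsCoupling.exists_comp {π₁ π₂ : Measure (Ed d × Ed d)} {μ ν ρ : P2 d}
    (h₁ : IsCoupling π₁ μ ν) (h₂ : IsCoupling π₂ ν ρ) :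
    ∃ π, IsCoupling π μ ρ ∧ l2Cost π ≤ l2Cost π₁ + l2Cost π₂ := by
  have := ν.2.1
  have := h₁.swap.isProbabilityMeasure
  have := h₂.isProbabilityMeasure
  set σ := π₁.map Prod.swap
  have hσ : ν.1 ⊗ₘ σ.condKernel = σ := by rw [← h₁.swap.1]; exact σ.disintegrate _
  have hπ₂ : ν.1 ⊗ₘ π₂.condKernel = π₂ := by rw [← h₂.1]; exact π₂.disintegrate _
  set β := ν.1 ⊗ₘ (σ.condKernel ×ₖ π₂.condKernel)
  have hβ₁ : β.map (Prod.map id Prod.fst) = σ := by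
    rw [← Measure.compProd_map measurable_fst, ← Kernel.fst_eq, Kernel.fst_prod, hσ]
  have hβ₂ : β.map (Prod.map id Prod.snd) = π₂ := by
    rw [← Measure.compProd_map measurable_snd, ← Kernel.snd_eq, Kernel.snd_prod, hπ₂]
  have hf : AEStronglyMeasurable (fun p : Ed d × Ed d × Ed d => p.1 - p.2.2) β := by fun_prop
  have hg : AEStronglyMeasurable (fun p : Ed d × Ed d × Ed d => p.1 - p.2.1) β := by fun_prop
  refine ⟨β.map Prod.snd, ⟨?_, ?_⟩, ?_⟩
  · rw [Measure.map_map measurable_fst measurable_snd,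
      show Prod.fst ∘ Prod.snd = Prod.snd ∘ Prod.map id Prod.fst from rfl,
      ← Measure.map_map measurable_snd (by fun_prop), hβ₁]
    exact h₁.swap.2
  · rw [Measure.map_map measurable_snd measurable_snd,
      show Prod.snd ∘ Prod.snd = Prod.snd ∘ Prod.map id Prod.snd from rfl,
      ← Measure.map_map measurable_snd (by fun_prop), hβ₂]
    exact h₂.2
  · calc l2Cost (β.map Prod.snd)
        = eLpNorm ((fun p : Ed d × Ed d × Ed d => p.1 - p.2.2)
            - fun p : Ed d × Ed d × Ed d => p.1 - p.2.1) 2 β := by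
          rw [l2Cost_map measurable_snd]
          congr 1
          ext p : 1
          simp
      _ ≤ eLpNorm (fun p : Ed d × Ed d × Ed d => p.1 - p.2.2) 2 β
            + eLpNorm (fun p : Ed d × Ed d × Ed d => p.1 - p.2.1) 2 β :=
          eLpNorm_sub_le hf hg (by norm_num)
      _ = l2Cost π₁ + l2Cost π₂ := by
          have e₁ : l2Cost π₁ = eLpNorm (fun p => p.1 - p.2.1) 2 β := by
            rw [← l2Cost_map_swap π₁]
            change l2Cost σ = _
            rw [← hβ₁, l2Cost_map (by fun_prop)]
            rfl
          have e₂ : l2Cost π₂ = eLpNorm (fun p => p.1 - p.2.2) 2 β := by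
            rw [← hβ₂, l2Cost_map (by fun_prop)]
            rfl
          rw [e₁, e₂, add_comm]

lemma W2_triangle (μ ν ρ : P2 d) : W2 μ ρ ≤ W2 μ ν + W2 ν ρ :=
  le_of_forall_pos_lt_add fun η hη => by
    obtain ⟨π₁, h₁, hlt₁⟩ := exists_coupling_l2Cost_lt μ ν (half_pos hη)
    obtain ⟨π₂, h₂, hlt₂⟩ := exists_coupling_l2Cost_lt ν ρ (half_pos hη)
    obtain ⟨π, h, hle⟩ := h₁.exists_comp h₂
    calc W2 μ ρ ≤ (l2Cost π).toReal := W2_le_l2Cost h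
      _ ≤ (l2Cost π₁).toReal + (l2Cost π₂).toReal := by
          rw [← ENNReal.toReal_add h₁.l2Cost_ne_top h₂.l2Cost_ne_top]
          exact ENNReal.toReal_mono (ENNReal.add_ne_top.2 ⟨h₁.l2Cost_ne_top, h₂.l2Cost_ne_top⟩) hle
      _ < W2 μ ν + W2 ν ρ + η := by linarith

def IsCoupling.interpolate {π : Measure (Ed d × Ed d)} {μ ν : P2 d} (h : IsCoupling π μ ν)
    (t : ℝ) : P2 d :=
  have := h.isProbabilityMeasure
  have : IsProbabilityMeasure (π.map fun p => (1 - t) • p.1 + t • p.2) :=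
    Measure.isProbabilityMeasure_map (by fun_prop)
  ⟨π.map fun p => (1 - t) • p.1 + t • p.2, isP2Meas_iff_memLp.2 <|
    (memLp_map_measure_iff aestronglyMeasurable_id (by fun_prop)).2 <|
      (h.memLp_fst.const_smul (1 - t)).add (h.memLp_snd.const_smul t)⟩

namespace IsCoupling

variable {π : Measure (Ed d × Ed d)} {μ ν : P2 d}

lemma interpolate_zero (h : IsCoupling π μ ν) : h.interpolate 0 = μ := by
  apply Subtype.ext
  simpa [interpolate] using h.1

lemma interpolate_one (h : IsCoupling π μ ν) : h.interpolate 1 = ν := by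
  apply Subtype.ext
  simpa [interpolate] using h.2

lemma W2_interpolate_le (h : IsCoupling π μ ν) (s t : ℝ) :
    W2 (h.interpolate s) (h.interpolate t) ≤ |t - s| * (l2Cost π).toReal := by
  set g : ℝ → Ed d × Ed d → Ed d := fun r p => (1 - r) • p.1 + r • p.2
  have hg : Measurable fun p => (g s p, g t p) := by fun_prop
  have hc : IsCoupling (π.map fun p => (g s p, g t p)) (h.interpolate s) (h.interpolate t) :=
    ⟨by rw [Measure.map_map measurable_fst hg]; rfl,
      by rw [Measure.map_map measurable_snd hg]; rfl⟩
  have hcost : l2Cost (π.map fun p => (g s p, g t p)) = ‖t - s‖ₑ * l2Cost π := by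
    rw [l2Cost_map hg, l2Cost, ← eLpNorm_const_smul]
    congr 1
    ext p : 1
    simp only [g, Pi.smul_apply]
    module
  calc W2 (h.interpolate s) (h.interpolate t) ≤ _ := W2_le_l2Cost hc
    _ = |t - s| * (l2Cost π).toReal := by
        rw [hcost, ENNReal.toReal_mul, toReal_enorm, Real.norm_eq_abs]

end IsCoupling

lemma le_natCast_of_succ_le_add_one {a : ℕ → ℝ} {n : ℕ} (h₀ : a 0 ≤ 0)
    (h : ∀ i < n, a (i + 1) ≤ a i + 1) : a n ≤ n := by
  induction n with
  | zero => simpa using h₀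
  | succ n ih =>
    have := ih fun i hi => h i (hi.trans n.lt_succ_self)
    push_cast
    linarith [h n n.lt_succ_self]

/-- `P₂` is a length space: a point of `B_M(m̂)` is reached from `m̂` in `n` interpolation steps
of length at most `δ`, each changing `φ` by at most `1`. -/
lemma UCmem.bddAbove_image_ballW {mhat : P2 d} {φ : P2 d → ℝ} (hφ : UCmem mhat φ) (M : ℝ) :
    BddAbove (φ '' ballW mhat M) := by
  obtain ⟨δ, hδ, hφδ⟩ := hφ.unif_cont (|M| + 1) (by positivity) 1 one_pos
  obtain ⟨n, hn⟩ := exists_nat_gt ((|M| + 1) / δ)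
  have hn₀ : (0 : ℝ) < n := lt_trans (by positivity) hn
  refine ⟨n, ?_⟩
  rintro _ ⟨ν, hν, rfl⟩
  obtain ⟨π, h, hπ⟩ := exists_coupling_l2Cost_lt mhat ν one_pos
  have hL : (l2Cost π).toReal ≤ |M| + 1 := by
    have : W2 mhat ν ≤ |M| := hν.trans (le_abs_self M)
    linarith
  set x : ℕ → P2 d := fun i => h.interpolate (i / n)
  have hx_ball (i : ℕ) (hi : i ≤ n) : W2 mhat (x i) ≤ |M| + 1 := by
    calc W2 mhat (x i) = W2 (h.interpolate 0) (x i) := by rw [h.interpolate_zero]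
      _ ≤ |(i : ℝ) / n - 0| * (l2Cost π).toReal := h.W2_interpolate_le _ _
      _ ≤ 1 * (|M| + 1) := by
          rw [sub_zero, abs_of_nonneg (by positivity)]
          gcongr
          exact (div_le_one hn₀).2 (by exact_mod_cast hi)
      _ = |M| + 1 := one_mul _
  have hx_step (i : ℕ) : W2 (x i) (x (i + 1)) ≤ δ := by
    calc W2 (x i) (x (i + 1)) ≤ |(↑(i + 1) : ℝ) / n - i / n| * (l2Cost π).toReal :=
          h.W2_interpolate_le _ _
      _ = (l2Cost π).toReal / n := by
          rw [← sub_div, Nat.cast_succ, add_sub_cancel_left, abs_of_pos (by positivity)]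
          ring
      _ ≤ δ := by
          rw [div_le_iff₀ hn₀]
          rw [div_lt_iff₀ hδ] at hn
          linarith
  have hchain : φ (x n) ≤ n := by
    refine le_natCast_of_succ_le_add_one (a := fun i => φ (x i)) ?_ fun i hi => ?_
    · simp [x, h.interpolate_zero, hφ.zero_at]
    · have := hφδ _ _ (hx_ball (i + 1) hi) (hx_ball i hi.le) (by rw [W2_comm]; exact hx_step i)
      linarith [(abs_le.1 this).2]
  simpa [x, div_self hn₀.ne', h.interpolate_one] using hchain

section Estimates

variable {mhat : P2 d} {φ : P2 d → ℝ} {κ ε R : ℝ}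

lemma UCmem.le_Sfun (hφ : UCmem mhat φ) {m : P2 d} (hm : W2 mhat m ≤ R) :
    φ m ≤ Sfun mhat φ R :=
  le_csSup (hφ.bddAbove_image_ballW R) ⟨m, hm, rfl⟩

lemma UCmem.sub_le_omegaR (hφ : UCmem mhat φ) {δ : ℝ} {ν₁ ν₂ : P2 d} (h : W2 ν₁ ν₂ ≤ δ)
    (h₁ : W2 mhat ν₁ ≤ Me mhat φ ε R) (h₂ : W2 mhat ν₂ ≤ Me mhat φ ε R) :
    φ ν₁ - φ ν₂ ≤ omegaR mhat φ ε R δ := by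
  obtain ⟨C, hC⟩ := hφ.bddAbove_image_ballW (Me mhat φ ε R)
  have hbdd : BddAbove {c : ℝ | ∃ ν₁ ν₂ : P2 d, W2 ν₁ ν₂ ≤ δ ∧ W2 mhat ν₁ ≤ Me mhat φ ε R ∧
      W2 mhat ν₂ ≤ Me mhat φ ε R ∧ c = |φ ν₁ - φ ν₂|} := by
    refine ⟨C, ?_⟩
    rintro _ ⟨ν₁, ν₂, -, h₁, h₂, rfl⟩
    have := hC ⟨ν₁, h₁, rfl⟩
    have := hC ⟨ν₂, h₂, rfl⟩
    rw [abs_le]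
    constructor <;> linarith [hφ.nonneg ν₁, hφ.nonneg ν₂]
  exact (le_abs_self _).trans (le_csSup hbdd ⟨ν₁, ν₂, h, h₁, h₂, rfl⟩)

lemma EkelandPt.W2_le_Mke {m μb : P2 d} (h : EkelandPt φ κ ε m μb) (hκ : 0 < κ) (hε : 0 ≤ ε)
    (hφμb : 0 ≤ φ μb) (hS : φ m ≤ Sfun mhat φ R) : W2 m μb ≤ Mke mhat φ κ ε R := by
  have h₁ := h.1
  rw [W2_comm μb m] at h₁
  set w := W2 m μb
  have hw : 0 ≤ w := W2_nonneg m μb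
  have hbound : 1 / (2 * κ ^ 2) * w ^ 2 + ε * w ≤ Sfun mhat φ R := by linarith
  have hS₀ : 0 ≤ Sfun mhat φ R := le_trans (by positivity) hbound
  have hsq : (w + ε * κ ^ 2) ^ 2 ≤ (κ * Real.sqrt (2 * Sfun mhat φ R + ε ^ 2 * κ ^ 2)) ^ 2 := by
    rw [mul_pow, Real.sq_sqrt (by positivity)]
    field_simp at hbound
    nlinarith
  rw [Mke]
  linarith [(pow_le_pow_iff_left₀ (by positivity) (by positivity) two_ne_zero).1 hsq]

lemma add_Mke_le_Me (hS : 0 ≤ Sfun mhat φ R) (hκ₀ : 0 < κ) (hκ₁ : κ ≤ 1) (hε : 0 ≤ ε) :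
    R + Mke mhat φ κ ε R ≤ Me mhat φ ε R := by
  have hκ2 : κ ^ 2 ≤ 1 := pow_le_one₀ hκ₀.le hκ₁
  have : κ * Real.sqrt (2 * Sfun mhat φ R + ε ^ 2 * κ ^ 2)
      ≤ Real.sqrt (2 * Sfun mhat φ R + ε ^ 2) := by
    rw [Real.le_sqrt (by positivity) (by positivity), mul_pow, Real.sq_sqrt (by positivity)]
    nlinarith [mul_le_mul_of_nonneg_left hκ2 (sq_nonneg ε)]
  rw [Mke, Me]
  nlinarith [mul_nonneg hε (sq_nonneg κ)]

lemma W2_le_mul_sqrt_infConv_term (hκ : 0 < κ) (m μ : P2 d) (hφμ : 0 ≤ φ μ) :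
    W2 m μ ≤ κ * Real.sqrt (2 * (φ μ + 1 / (2 * κ ^ 2) * W2 m μ ^ 2)) := by
  have hX : κ ^ 2 * (2 * (φ μ + 1 / (2 * κ ^ 2) * W2 m μ ^ 2))
      = 2 * κ ^ 2 * φ μ + W2 m μ ^ 2 := by
    field_simp
  calc W2 m μ ≤ Real.sqrt (2 * κ ^ 2 * φ μ + W2 m μ ^ 2) :=
        Real.le_sqrt_of_sq_le (by nlinarith [sq_nonneg κ])
    _ = _ := by rw [← hX, Real.sqrt_mul (sq_nonneg κ), Real.sqrt_sq hκ.le]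

/-- By (ii), `φ μ̄ - ε w ≤ g (F μ)` for every `μ`; as `g` is monotone and continuous, the bound
passes to `⨅ μ, F μ = φ_κ(m)`. -/
lemma EkelandPt.le_infConv {m μb : P2 d} (h : EkelandPt φ κ ε m μb) (hφ : ∀ μ, 0 ≤ φ μ)
    (hκ : 0 < κ) (hε : 0 ≤ ε) :
    φ μb ≤ infConv φ κ m + ε * κ * Real.sqrt (2 * infConv φ κ m) + ε * W2 m μb := by
  set F : P2 d → ℝ := fun μ => φ μ + 1 / (2 * κ ^ 2) * W2 m μ ^ 2
  set g : ℝ → ℝ := fun t => t + ε * κ * Real.sqrt (2 * t)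
  have hg_mono : Monotone g := fun a b hab =>
    add_le_add hab (mul_le_mul_of_nonneg_left (Real.sqrt_le_sqrt (by linarith)) (by positivity))
  have key (μ : P2 d) : φ μb - ε * W2 m μb ≤ g (F μ) := by
    have htri : W2 μb μ ≤ W2 m μb + W2 m μ := W2_comm μb m ▸ W2_triangle μb m μ
    have hdist := mul_le_mul_of_nonneg_left (W2_le_mul_sqrt_infConv_term hκ m μ (hφ μ)) hε
    have : 0 ≤ 1 / (2 * κ ^ 2) * W2 m μb ^ 2 := by positivity
    calc φ μb - ε * W2 m μb ≤ F μ + ε * W2 μb μ - ε * W2 m μb := by linarith [h.2 μ]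
      _ ≤ F μ + ε * W2 m μ := by linarith [mul_le_mul_of_nonneg_left htri hε]
      _ ≤ g (F μ) := by simp only [g, F]; linarith
  have : Nonempty (P2 d) := ⟨m⟩
  have hinf : g (infConv φ κ m) = ⨅ μ, g (F μ) :=
    hg_mono.map_ciInf_of_continuousAt (by fun_prop)
      ⟨0, by rintro _ ⟨μ, rfl⟩; exact add_nonneg (hφ μ) (by positivity)⟩
  have hmain : φ μb - ε * W2 m μb ≤ g (infConv φ κ m) := hinf ▸ le_ciInf key
  simp only [g] at hmain
  linarith

end Estimates

end Wasserstein

theorem statement6_general {d : ℕ} (mhat : P2 d) (R : ℝ)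
    (φ : P2 d → ℝ) (hφ : UCmem mhat φ) (κ ε : ℝ) (hκ : κ ∈ Ioc (0 : ℝ) 1)
    (hε : ε ∈ Ioc (0 : ℝ) 1)
    (m : P2 d) (hm : W2 mhat m ≤ R) (hek : ∃ μb : P2 d, EkelandPt φ κ ε m μb) :
    φ m - infConv φ κ m ≤ omegaR mhat φ ε R (Mke mhat φ κ ε R) + Nke mhat φ κ ε R m := by
  obtain ⟨μb, hμb⟩ := hek
  have hS := hφ.le_Sfun hm
  have hw : W2 m μb ≤ Mke mhat φ κ ε R := hμb.W2_le_Mke hκ.1 hε.1.le (hφ.nonneg μb) hS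
  have hMe : R + Mke mhat φ κ ε R ≤ Me mhat φ ε R :=
    add_Mke_le_Me ((hφ.nonneg m).trans hS) hκ.1 hκ.2 hε.1.le
  have hω : φ m - φ μb ≤ omegaR mhat φ ε R (Mke mhat φ κ ε R) :=
    hφ.sub_le_omegaR hw (by linarith [W2_nonneg m μb])
      (by linarith [W2_triangle mhat m μb])
  have hinf := hμb.le_infConv hφ.nonneg hκ.1 hε.1.le
  have := mul_le_mul_of_nonneg_left hw hε.1.le
  rw [Nke]
  linarith

/-- `φ − φ_κ` is small on bounded sets. -/
theorem statement6 {d : ℕ} (mhat : P2 d) (R : ℝ) (hR : 0 < R)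
    (φ : P2 d → ℝ) (hφ : UCmem mhat φ) (κ ε : ℝ) (hκ : κ ∈ Ioc (0 : ℝ) 1)
    (hε : ε ∈ Ioc (0 : ℝ) 1)
    (m : P2 d) (hm : W2 mhat m ≤ R) (hek : ∃ μb : P2 d, EkelandPt φ κ ε m μb) :
    φ m - infConv φ κ m ≤ omegaR mhat φ ε R (Mke mhat φ κ ε R) + Nke mhat φ κ ε R m :=
  statement6_general mhat R φ hφ κ ε hκ hε m hm hek
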